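/- Let S_a : [0, 1] → [0, 1] be defined by S_a(x) := 2x for 0 ≤ x ≤ 1/2 and S_a(x) := 1/x − 1 for 1/2 < x ≤ 1. Then the Borel measure on [0, 1] with density x ↦ 1/((1+x)·log 2) with respect to Lebesgue measure is an S_a-invariant probability measure: the pushforward of this measure under S_a equals itself. (Equivalently, the density φ(x) = 1/(1+x) satisfies the Ruelle equation φ(x) = (1/2)·φ(x/2) + (1/(1+x)²)·φ(1/(1+x)) for all x ∈ [0, 1].) -/

import Mathlib

/-! Both measures are probability measures on `ℝ`, so it suffices to compare them on
half-lines `(-∞, t]` with `0 < t < 1`. The Gauss measure of `[a, b] ⊆ [0, 1]` is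
`log₂ ((1 + b) / (1 + a))`, and `S_a⁻¹ [0, t]` is the disjoint union of the images `[0, t/2]`
and `[1/(1+t), 1]` of `[0, t]` under the two inverse branches `x ↦ x/2` and `x ↦ 1/(1+x)`;
their masses `log₂ (1 + t/2)` and `log₂ (2 (1 + t) / (2 + t))` add up to `log₂ (1 + t)`. -/

open MeasureTheory

/-- The additive Hei-Chi Chan map: `S_a(x) = 2x` for `x ≤ 1/2` and `S_a(x) = 1/x − 1`
for `x > 1/2`. -/
noncomputable def chanMap (x : ℝ) : ℝ :=
  if x ≤ 1 / 2 then 2 * x else 1 / x - 1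

/-- The Gauss measure on `[0, 1]`: density `x ↦ 1/((1+x)·log 2)` w.r.t. Lebesgue
measure. -/
noncomputable def chanMeasure : Measure ℝ :=
  (volume.restrict (Set.Icc (0 : ℝ) 1)).withDensity
    (fun x => ENNReal.ofReal (1 / ((1 + x) * Real.log 2)))

open Set

namespace MeasureTheory.Measure

variable {α : Type*} [TopologicalSpace α] [MeasurableSpace α] [SecondCountableTopology α]
  [LinearOrder α] [OrderTopology α] [BorelSpace α]

theorem ext_of_Iic_on_Ioo {μ ν : Measure α} [IsProbabilityMeasure μ] [IsProbabilityMeasure ν]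
    {a b : α} (hμa : μ (Iic a) = 0) (hνa : ν (Iic a) = 0) (hμb : μ (Iic b) = 1)
    (hνb : ν (Iic b) = 1) (h : ∀ t ∈ Ioo a b, μ (Iic t) = ν (Iic t)) : μ = ν := by
  refine ext_of_Iic μ ν fun t => ?_
  rcases le_or_gt t a with hta | hat
  · rw [measure_mono_null (Iic_subset_Iic.2 hta) hμa,
      measure_mono_null (Iic_subset_Iic.2 hta) hνa]
  rcases lt_or_ge t b with htb | hbt
  · exact h t ⟨hat, htb⟩
  · rw [le_antisymm prob_le_one (hμb ▸ measure_mono (Iic_subset_Iic.2 hbt)),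
      le_antisymm prob_le_one (hνb ▸ measure_mono (Iic_subset_Iic.2 hbt))]

end MeasureTheory.Measure

lemma integral_one_div_one_add_mul_log_two {a b : ℝ} (ha : -1 < a) (hb : -1 < b) :
    ∫ x in a..b, 1 / ((1 + x) * Real.log 2) = Real.logb 2 ((1 + b) / (1 + a)) := by
  simp only [one_div, mul_inv]
  rw [intervalIntegral.integral_mul_const,
    intervalIntegral.integral_comp_add_left (fun x => x⁻¹),
    integral_inv_of_pos (by linarith) (by linarith), Real.logb, ← div_eq_mul_inv]

lemma lintegral_ofReal_one_div_one_add_mul_log_two_Icc {a b : ℝ} (ha : -1 < a) (hab : a ≤ b) :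
    ∫⁻ x in Icc a b, ENNReal.ofReal (1 / ((1 + x) * Real.log 2)) =
      ENNReal.ofReal (Real.logb 2 ((1 + b) / (1 + a))) := by
  have hpos : ∀ x ∈ Icc a b, 0 < 1 / ((1 + x) * Real.log 2) := fun x hx => by
    have : 0 < 1 + x := by linarith [hx.1]
    positivity
  have hcont : ContinuousOn (fun x => 1 / ((1 + x) * Real.log 2)) (Icc a b) :=
    continuousOn_const.div (by fun_prop) fun x hx => by
      have : 0 < 1 + x := by linarith [hx.1]
      positivity
  rw [← ofReal_integral_eq_lintegral_ofReal hcont.integrableOn_Icc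
      ((ae_restrict_iff' measurableSet_Icc).2 (ae_of_all _ fun x hx => (hpos x hx).le)),
    integral_Icc_eq_integral_Ioc, ← intervalIntegral.integral_of_le hab,
    integral_one_div_one_add_mul_log_two ha (by linarith)]

lemma measurable_chanMap : Measurable chanMap :=
  Measurable.ite measurableSet_Iic (by fun_prop) (by fun_prop)

lemma chanMap_mapsTo_Icc : MapsTo chanMap (Icc 0 1) (Icc 0 1) := by
  rintro x ⟨hx0, hx1⟩
  unfold chanMap
  split_ifs with hx
  · constructor <;> linarith
  · have hx0 : 0 < x := by linarith
    have : 1 ≤ 1 / x := one_le_one_div hx0 hx1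
    have : 1 / x ≤ 2 := by rw [div_le_iff₀ hx0]; linarith
    constructor <;> linarith

lemma chanMap_preimage_Iic_inter_Icc {t : ℝ} (ht0 : 0 ≤ t) (ht1 : t < 1) :
    chanMap ⁻¹' Iic t ∩ Icc 0 1 = Icc 0 (t / 2) ∪ Icc (1 / (1 + t)) 1 := by
  have h_half : 1 / 2 < 1 / (1 + t) := one_div_lt_one_div_of_lt (by linarith) (by linarith)
  ext x
  simp only [mem_inter_iff, mem_preimage, mem_Iic, mem_Icc, mem_union, chanMap]
  split_ifs with hx
  · constructor
    · rintro ⟨h, h0, -⟩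
      exact Or.inl ⟨h0, by linarith⟩
    · rintro (⟨h0, h⟩ | ⟨h, -⟩)
      · exact ⟨by linarith, h0, by linarith⟩
      · linarith
  · have hx0 : 0 < x := by linarith
    have hxt : ¬ x ≤ t / 2 := by linarith
    rw [sub_le_iff_le_add, one_div_le hx0 (by linarith), add_comm]
    have := hx0.le
    tauto

lemma chanMeasure_inter_Icc (s : Set ℝ) : chanMeasure (s ∩ Icc 0 1) = chanMeasure s :=
  measure_inter_conull (withDensity_absolutelyContinuous _ _ (ae_restrict_mem measurableSet_Icc))

lemma chanMeasure_Icc {a b : ℝ} (ha : 0 ≤ a) (hab : a ≤ b) (hb : b ≤ 1) :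
    chanMeasure (Icc a b) = ENNReal.ofReal (Real.logb 2 ((1 + b) / (1 + a))) := by
  rw [chanMeasure, withDensity_apply _ measurableSet_Icc,
    Measure.restrict_restrict measurableSet_Icc,
    inter_eq_left.2 (Icc_subset_Icc ha hb),
    lintegral_ofReal_one_div_one_add_mul_log_two_Icc (by linarith) hab]

lemma chanMeasure_Icc_zero_one : chanMeasure (Icc 0 1) = 1 := by
  rw [chanMeasure_Icc le_rfl zero_le_one le_rfl]
  norm_num

instance : IsProbabilityMeasure chanMeasure :=
  ⟨by rw [← chanMeasure_inter_Icc, univ_inter, chanMeasure_Icc_zero_one]⟩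

lemma chanMeasure_Iic {t : ℝ} (ht : t ≤ 1) : chanMeasure (Iic t) = chanMeasure (Icc 0 t) := by
  rw [← chanMeasure_inter_Icc, inter_comm, ← Ici_inter_Iic, inter_assoc, Iic_inter_Iic,
    min_eq_right ht, Ici_inter_Iic]

lemma chanMeasure_Icc_half_add_Icc_one_div {t : ℝ} (ht0 : 0 ≤ t) (ht1 : t ≤ 1) :
    chanMeasure (Icc 0 (t / 2)) + chanMeasure (Icc (1 / (1 + t)) 1) = chanMeasure (Icc 0 t) := by
  have h1t : 0 < 1 + t := by linarith
  have hinv : 1 / (1 + t) ≤ 1 := (div_le_one h1t).2 (by linarith)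
  rw [chanMeasure_Icc le_rfl (by linarith) (by linarith),
    chanMeasure_Icc (by positivity) hinv le_rfl, chanMeasure_Icc le_rfl ht0 ht1,
    ← ENNReal.ofReal_add (Real.logb_nonneg one_lt_two ?_) (Real.logb_nonneg one_lt_two ?_),
    ← Real.logb_mul (by positivity) (by positivity)]
  · congr 2
    field_simp
    ring
  · rw [le_div_iff₀ (by norm_num)]; linarith
  · rw [le_div_iff₀ (by positivity)]; linarith

lemma map_chanMap_chanMeasure_Iic {t : ℝ} (ht0 : 0 ≤ t) (ht1 : t < 1) :
    chanMeasure.map chanMap (Iic t) = chanMeasure (Iic t) := by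
  have h_half : t / 2 < 1 / (1 + t) := by
    have := one_div_lt_one_div_of_lt (by linarith : (0:ℝ) < 1 + t) (by linarith : 1 + t < 2)
    linarith
  rw [Measure.map_apply measurable_chanMap measurableSet_Iic, ← chanMeasure_inter_Icc,
    chanMap_preimage_Iic_inter_Icc ht0 ht1,
    measure_union (disjoint_left.2 fun x h1 h2 => by linarith [h1.2, h2.1]) measurableSet_Icc,
    chanMeasure_Icc_half_add_Icc_one_div ht0 ht1.le, chanMeasure_Iic ht1.le]

/-- The Borel measure on `[0, 1]` with density `x ↦ 1/((1+x)·log 2)`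
with respect to Lebesgue measure is an `S_a`-invariant probability measure for the
additive Hei-Chi Chan map `S_a(x) = 2x` (`x ≤ 1/2`), `1/x − 1` (`x > 1/2`): it is a
probability measure and its pushforward under `S_a` equals itself. -/
theorem stmt_19 :
    chanMeasure (Set.Icc (0 : ℝ) 1) = 1 ∧
    Measure.map chanMap chanMeasure = chanMeasure := by
  have := Measure.isProbabilityMeasure_map (μ := chanMeasure) measurable_chanMap.aemeasurable
  have h_Iic_zero : chanMeasure (Iic 0) = 0 := by
    rw [chanMeasure_Iic zero_le_one, chanMeasure_Icc le_rfl le_rfl zero_le_one]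
    simp
  have h_Iic_one : chanMeasure (Iic 1) = 1 := by
    rw [chanMeasure_Iic le_rfl, chanMeasure_Icc_zero_one]
  have h_map_Iic_one : chanMeasure.map chanMap (Iic 1) = 1 := by
    refine le_antisymm prob_le_one ?_
    rw [Measure.map_apply measurable_chanMap measurableSet_Iic, ← chanMeasure_Icc_zero_one]
    exact measure_mono fun x hx => (chanMap_mapsTo_Icc hx).2
  refine ⟨chanMeasure_Icc_zero_one, Measure.ext_of_Iic_on_Ioo
    ((map_chanMap_chanMeasure_Iic le_rfl zero_lt_one).trans h_Iic_zero) h_Iic_zero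
    h_map_Iic_one h_Iic_one fun t ht => map_chanMap_chanMeasure_Iic ht.1.le ht.2⟩
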